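/- Let n ≥ 1 be a natural number and let s(n) = 0 if n is even and s(n) = * if n is odd. Then, as combinatorial games, s(n) − n − { n + 1 | s(n) } is equivalent to { −n | −(2n + 1) + s(n) }. -/

import Mathlib

namespace SetTheory

universe u

/-- Combinatorial pregames (removed from Mathlib; restored with the old meaning). -/
inductive PGame : Type (u + 1)
  | mk : ∀ α β : Type u, (α → PGame) → (β → PGame) → PGame

namespace PGame

instance : Zero PGame := ⟨⟨PEmpty, PEmpty, PEmpty.elim, PEmpty.elim⟩⟩

instance : One PGame := ⟨⟨PUnit, PEmpty, fun _ => 0, PEmpty.elim⟩⟩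

def neg : PGame.{u} → PGame.{u}
  | mk l r L R => mk r l (fun i => neg (R i)) (fun i => neg (L i))

instance : Neg PGame := ⟨neg⟩

noncomputable def add (x y : PGame.{u}) : PGame.{u} := by
  induction x generalizing y with | mk xl xr _ _ IHxl IHxr => ?_
  induction y with | mk yl yr yL yR IHyl IHyr => ?_
  have y := mk yl yr yL yR
  refine ⟨xl ⊕ yl, xr ⊕ yr, Sum.rec ?_ ?_, Sum.rec ?_ ?_⟩
  · exact fun i => IHxl i y
  · exact IHyl
  · exact fun i => IHxr i y
  · exact IHyr

noncomputable instance : Add PGame.{u} := ⟨add⟩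

noncomputable instance : Sub PGame.{u} := ⟨fun x y => x + -y⟩

noncomputable instance : NatCast PGame.{u} := ⟨Nat.unaryCast⟩

/-- The game `* = {0 | 0}`. -/
def star : PGame.{u} := ⟨PUnit, PUnit, fun _ => 0, fun _ => 0⟩

/-- Simultaneous definition of `x ≤ y` (first component) and `x ⧏ y` (second). -/
noncomputable def leLF (x : PGame.{u}) : PGame.{u} → Prop × Prop := by
  induction x with
  | mk xl xr xL xR IHxl IHxr => ?_
  intro y
  induction y with
  | mk yl yr yL yR IHyl IHyr => ?_
  exact ((∀ i, (IHxl i (mk yl yr yL yR)).2) ∧ (∀ j, (IHyr j).2),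
    (∃ i, (IHyl i).1) ∨ (∃ j, (IHxr j (mk yl yr yL yR)).1))

noncomputable instance : LE PGame.{u} := ⟨fun x y => (leLF x y).1⟩

/-- `x ≈ y` iff `x ≤ y` and `y ≤ x`. -/
def Equiv (x y : PGame.{u}) : Prop := x ≤ y ∧ y ≤ x

instance : HasEquiv PGame.{u} := ⟨Equiv⟩

end PGame

end SetTheory

open SetTheory

namespace SnortFormal

/-- The state of a vertex in a Snort position: untinted (`free`), tinted Blue,
tinted Red, or removed from play (`dead`). -/
inductive Cell : Type
  | free | blue | red | dead
deriving DecidableEq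

/-- The effect on a neighbouring cell of Left playing next to it:
it becomes tinted Blue, and if it was tinted Red it is removed. -/
def tintB : Cell → Cell
  | .free => .blue
  | .blue => .blue
  | .red  => .dead
  | .dead => .dead

/-- The effect on a neighbouring cell of Right playing next to it. -/
def tintR : Cell → Cell
  | .free => .red
  | .blue => .dead
  | .red  => .red
  | .dead => .dead

/-- The position resulting from Left playing on vertex `v`: `v` is removed and
all of its neighbours are tinted Blue (doubly-tinted vertices are removed). -/
def moveL {V : Type} [DecidableEq V] (G : SimpleGraph V) [DecidableRel G.Adj]
    (c : V → Cell) (v : V) : V → Cell :=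
  fun w => if w = v then .dead else if G.Adj v w then tintB (c w) else c w

/-- The position resulting from Right playing on vertex `v`. -/
def moveR {V : Type} [DecidableEq V] (G : SimpleGraph V) [DecidableRel G.Adj]
    (c : V → Cell) (v : V) : V → Cell :=
  fun w => if w = v then .dead else if G.Adj v w then tintR (c w) else c w

/-- The vertices still present in the position. -/
def aliveSet {V : Type} [Fintype V] (c : V → Cell) : Finset V :=
  Finset.univ.filter (fun v => c v ≠ Cell.dead)

theorem alive_move_lt {V : Type} [Fintype V] [DecidableEq V]
    (G : SimpleGraph V) [DecidableRel G.Adj] (c : V → Cell) (v : V)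
    (hv : c v ≠ Cell.dead) (f : Cell → Cell) (hf : f Cell.dead = Cell.dead) :
    (aliveSet (fun w => if w = v then Cell.dead else if G.Adj v w then f (c w) else c w)).card
      < (aliveSet c).card := by
  apply Finset.card_lt_card
  constructor
  · intro w hw
    simp only [aliveSet, Finset.mem_filter, Finset.mem_univ, true_and] at hw ⊢
    by_cases h : w = v
    · simp [h] at hw
    · simp only [h, if_false] at hw
      by_cases hadj : G.Adj v w
      · simp only [hadj, if_true] at hw
        intro hd
        rw [hd, hf] at hw
        exact hw rfl
      · simpa [hadj] using hw
  · intro hsub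
    have hv' : v ∈ aliveSet c := by
      simp [aliveSet, hv]
    have := hsub hv'
    simp [aliveSet] at this

/-- The combinatorial pregame given by playing Snort on the graph `G` with
tinting `c`. Left may play on any vertex that is free or tinted Blue; Right
may play on any vertex that is free or tinted Red. -/
def snort {V : Type} [Fintype V] [DecidableEq V] (G : SimpleGraph V) [DecidableRel G.Adj]
    (c : V → Cell) : PGame :=
  PGame.mk {v : V // c v = Cell.free ∨ c v = Cell.blue}
    {v : V // c v = Cell.free ∨ c v = Cell.red}
    (fun v => snort G (moveL G c v.1))
    (fun v => snort G (moveR G c v.1))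
termination_by (aliveSet c).card
decreasing_by
  · exact alive_move_lt G c v.1 (by rcases v.2 with h | h <;> simp [h]) tintB rfl
  · exact alive_move_lt G c v.1 (by rcases v.2 with h | h <;> simp [h]) tintR rfl

/-- Build a simple graph from a (not necessarily symmetric) Boolean adjacency
function by symmetrizing and removing loops. -/
def graphOfBool {W : Type} (f : W → W → Bool) : SimpleGraph W where
  Adj u v := u ≠ v ∧ (f u v ∨ f v u)
  symm := ⟨fun _ _ ⟨h1, h2⟩ => ⟨h1.symm, h2.symm⟩⟩
  loopless := ⟨fun _ h => h.1 rfl⟩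

instance {W : Type} [DecidableEq W] (f : W → W → Bool) :
    DecidableRel (graphOfBool f).Adj :=
  fun u v => inferInstanceAs (Decidable (u ≠ v ∧ (f u v ∨ f v u)))

/-- The game `{A | B}` with unique Left option `A` and unique Right option `B`. -/
def ofPair (A B : PGame) : PGame :=
  PGame.mk PUnit PUnit (fun _ => A) (fun _ => B)

/-- The game `±{A, B} = {A, B | −A, −B}`. -/
def pmPair (A B : PGame) : PGame :=
  PGame.mk Bool Bool (fun x => if x then A else B) (fun x => if x then -A else -B)


/-- `s(n)`: the game `0` if `n` is even and `* = {0 | 0}` if `n` is odd. -/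
def sgame (n : ℕ) : PGame := if Even n then 0 else PGame.star

/-- The star `K_{1,n}`: centre `none`, leaves `some i`. -/
abbrev starGraph (n : ℕ) : SimpleGraph (Option (Fin n)) :=
  graphOfBool (fun u v =>
    match u, v with
    | none, some _ => true
    | _, _ => false)

end SnortFormal

namespace SetTheory

universe u

namespace PGame

def LeftMoves : PGame.{u} → Type u
  | mk l _ _ _ => l

def RightMoves : PGame.{u} → Type u
  | mk _ r _ _ => r

def moveLeft : ∀ g : PGame.{u}, LeftMoves g → PGame.{u}
  | mk _ _ L _ => L

def moveRight : ∀ g : PGame.{u}, RightMoves g → PGame.{u}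
  | mk _ _ _ R => R

/-- `x ⧏ y`: the second component of `leLF`. -/
def LF (x y : PGame.{u}) : Prop := (leLF x y).2

infix:50 " ⧏ " => LF

theorem le_iff_forall_lf {x y : PGame.{u}} :
    x ≤ y ↔ (∀ i, x.moveLeft i ⧏ y) ∧ ∀ j, x ⧏ y.moveRight j := by
  cases x; cases y; exact Iff.rfl

theorem lf_iff_exists_le {x y : PGame.{u}} :
    x ⧏ y ↔ (∃ i, x ≤ y.moveLeft i) ∨ ∃ j, x.moveRight j ≤ y := by
  cases x; cases y; exact Iff.rfl

theorem not_le_lf_aux : ∀ x y : PGame.{u}, (¬ x ≤ y ↔ y ⧏ x) ∧ (¬ x ⧏ y ↔ y ≤ x) := by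
  intro x
  induction x with
  | mk xl xr xL xR IHxl IHxr => ?_
  intro y
  induction y with
  | mk yl yr yL yR IHyl IHyr => ?_
  constructor
  · constructor
    · intro h
      apply lf_iff_exists_le.2
      by_cases h1 : ∀ i, xL i ⧏ mk yl yr yL yR
      · have h2 : ¬ ∀ j, mk xl xr xL xR ⧏ yR j := fun h2 => h (le_iff_forall_lf.2 ⟨h1, h2⟩)
        obtain ⟨j, hj⟩ := not_forall.1 h2
        exact Or.inr ⟨j, (IHyr j).2.1 hj⟩
      · obtain ⟨i, hi⟩ := not_forall.1 h1
        exact Or.inl ⟨i, (IHxl i _).2.1 hi⟩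
    · intro h hle
      rcases lf_iff_exists_le.1 h with ⟨i, hi⟩ | ⟨j, hj⟩
      · exact (IHxl i _).2.2 hi ((le_iff_forall_lf.1 hle).1 i)
      · exact (IHyr j).2.2 hj ((le_iff_forall_lf.1 hle).2 j)
  · constructor
    · intro h
      apply le_iff_forall_lf.2
      exact ⟨fun i => (IHyl i).1.1 (fun h' => h (lf_iff_exists_le.2 (Or.inl ⟨i, h'⟩))),
        fun j => (IHxr j _).1.1 (fun h' => h (lf_iff_exists_le.2 (Or.inr ⟨j, h'⟩)))⟩
    · intro h hlf
      rcases lf_iff_exists_le.1 hlf with ⟨i, hi⟩ | ⟨j, hj⟩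
      · exact (IHyl i).1.2 ((le_iff_forall_lf.1 h).1 i) hi
      · exact (IHxr j _).1.2 ((le_iff_forall_lf.1 h).2 j) hj

theorem not_le {x y : PGame.{u}} : ¬ x ≤ y ↔ y ⧏ x := (not_le_lf_aux x y).1

theorem not_lf {x y : PGame.{u}} : ¬ x ⧏ y ↔ y ≤ x := (not_le_lf_aux x y).2

theorem le_of_forall_lf {x y : PGame.{u}} (h₁ : ∀ i, x.moveLeft i ⧏ y)
    (h₂ : ∀ j, x ⧏ y.moveRight j) : x ≤ y :=
  le_iff_forall_lf.2 ⟨h₁, h₂⟩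

theorem moveLeft_lf_of_le {x y : PGame.{u}} (h : x ≤ y) (i) : x.moveLeft i ⧏ y :=
  (le_iff_forall_lf.1 h).1 i

theorem lf_moveRight_of_le {x y : PGame.{u}} (h : x ≤ y) (j) : x ⧏ y.moveRight j :=
  (le_iff_forall_lf.1 h).2 j

theorem _root_.LE.le.lf_moveRight {x y : PGame.{u}} (h : x ≤ y) (j) : x ⧏ y.moveRight j :=
  lf_moveRight_of_le h j

theorem lf_of_le_moveLeft {x y : PGame.{u}} {i} (h : x ≤ y.moveLeft i) : x ⧏ y :=
  lf_iff_exists_le.2 (Or.inl ⟨i, h⟩)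

theorem lf_of_moveRight_le {x y : PGame.{u}} {j} (h : x.moveRight j ≤ y) : x ⧏ y :=
  lf_iff_exists_le.2 (Or.inr ⟨j, h⟩)

theorem pg_le_refl : ∀ x : PGame.{u}, x ≤ x := by
  intro x
  induction x with
  | mk xl xr xL xR IHl IHr => ?_
  exact le_of_forall_lf (fun i => lf_of_le_moveLeft (i := i) (IHl i))
    (fun j => lf_of_moveRight_le (j := j) (IHr j))

theorem le_trans_aux {x y z : PGame.{u}}
    (h₁ : ∀ {i}, y ≤ z → z ≤ x.moveLeft i → y ≤ x.moveLeft i)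
    (h₂ : ∀ {j}, z.moveRight j ≤ x → x ≤ y → z.moveRight j ≤ y) (hxy : x ≤ y) (hyz : y ≤ z) :
    x ≤ z :=
  le_of_forall_lf
    (fun i => PGame.not_le.1 fun h => PGame.not_lf.2 (h₁ hyz h) (moveLeft_lf_of_le hxy i))
    fun j => PGame.not_le.1 fun h => PGame.not_lf.2 (h₂ h hxy) (lf_moveRight_of_le hyz j)

theorem le_trans_all : ∀ x y z : PGame.{u},
    (x ≤ y → y ≤ z → x ≤ z) ∧ (y ≤ z → z ≤ x → y ≤ x) ∧ (z ≤ x → x ≤ y → z ≤ y) := by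
  intro x
  induction x with
  | mk _ _ _ _ IHxl IHxr => ?_
  intro y
  induction y with
  | mk _ _ _ _ IHyl IHyr => ?_
  intro z
  induction z with
  | mk _ _ _ _ IHzl IHzr => ?_
  exact
    ⟨le_trans_aux (fun {i} => (IHxl i _ _).2.1) fun {j} => (IHzr j).2.2,
      le_trans_aux (fun {i} => (IHyl i _).2.2) fun {j} => (IHxr j _ _).1,
      le_trans_aux (fun {i} => (IHzl i).1) fun {j} => (IHyr j _).2.1⟩

theorem pg_le_trans {x y z : PGame.{u}} (h₁ : x ≤ y) (h₂ : y ≤ z) : x ≤ z :=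
  (le_trans_all x y z).1 h₁ h₂

instance : Preorder PGame.{u} where
  le := fun x y => x ≤ y
  lt := fun x y => x ≤ y ∧ ¬ y ≤ x
  lt_iff_le_not_ge := fun _ _ => Iff.rfl
  le_refl := pg_le_refl
  le_trans := fun _ _ _ => pg_le_trans

theorem equiv_def {x y : PGame.{u}} : x ≈ y ↔ x ≤ y ∧ y ≤ x := Iff.rfl

theorem equiv_refl' (x : PGame.{u}) : x ≈ x := equiv_def.2 ⟨pg_le_refl x, pg_le_refl x⟩

theorem equiv_symm' {x y : PGame.{u}} (h : x ≈ y) : y ≈ x :=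
  equiv_def.2 ⟨(equiv_def.1 h).2, (equiv_def.1 h).1⟩

theorem equiv_trans' {x y z : PGame.{u}} (h₁ : x ≈ y) (h₂ : y ≈ z) : x ≈ z :=
  equiv_def.2 ⟨pg_le_trans (equiv_def.1 h₁).1 (equiv_def.1 h₂).1,
    pg_le_trans (equiv_def.1 h₂).2 (equiv_def.1 h₁).2⟩

theorem lf_of_lt {x y : PGame.{u}} (h : x < y) : x ⧏ y := PGame.not_le.1 h.2

instance isEmpty_zero_leftMoves : IsEmpty (LeftMoves (0 : PGame.{u})) :=
  inferInstanceAs (IsEmpty PEmpty)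

instance isEmpty_zero_rightMoves : IsEmpty (RightMoves (0 : PGame.{u})) :=
  inferInstanceAs (IsEmpty PEmpty)

instance isEmpty_one_rightMoves : IsEmpty (RightMoves (1 : PGame.{u})) :=
  inferInstanceAs (IsEmpty PEmpty)

theorem zero_lt_one : (0 : PGame.{u}) < 1 := by
  refine ⟨le_of_forall_lf (fun i => isEmptyElim i) (fun j => isEmptyElim j), fun h => ?_⟩
  exact PGame.not_lf.2 (pg_le_refl 0) (moveLeft_lf_of_le h (PUnit.unit : LeftMoves (1 : PGame.{u})))

theorem star_moveLeft (i) : PGame.star.{u}.moveLeft i = 0 := rfl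

theorem star_moveRight (j) : PGame.star.{u}.moveRight j = 0 := rfl

theorem zero_lf_star : (0 : PGame.{u}) ⧏ PGame.star :=
  lf_of_le_moveLeft (i := (PUnit.unit : LeftMoves PGame.star.{u})) (pg_le_refl 0)

theorem star_lf_zero : PGame.star.{u} ⧏ 0 :=
  lf_of_moveRight_le (j := (PUnit.unit : RightMoves PGame.star.{u})) (pg_le_refl 0)

theorem neg_le_lf : ∀ x y : PGame.{u}, (x ≤ y → -y ≤ -x) ∧ (x ⧏ y → -y ⧏ -x) := by
  intro x
  induction x with
  | mk xl xr xL xR IHxl IHxr => ?_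
  intro y
  induction y with
  | mk yl yr yL yR IHyl IHyr => ?_
  constructor
  · intro h
    have h' := le_iff_forall_lf.1 h
    apply le_iff_forall_lf.2
    exact ⟨fun j => (IHyr j).2 (h'.2 j), fun i => (IHxl i _).2 (h'.1 i)⟩
  · intro h
    rcases lf_iff_exists_le.1 h with ⟨i, hi⟩ | ⟨j, hj⟩
    · exact @lf_of_moveRight_le (-(mk yl yr yL yR)) (-(mk xl xr xL xR)) i ((IHyl i).1 hi)
    · exact @lf_of_le_moveLeft (-(mk yl yr yL yR)) (-(mk xl xr xL xR)) j ((IHxr j _).1 hj)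

theorem neg_congr' {x y : PGame.{u}} (h : x ≈ y) : -x ≈ -y :=
  equiv_def.2 ⟨(neg_le_lf _ _).1 (equiv_def.1 h).2, (neg_le_lf _ _).1 (equiv_def.1 h).1⟩

noncomputable def toLeftMovesAdd {x y : PGame.{u}} :
    x.LeftMoves ⊕ y.LeftMoves → (x + y).LeftMoves := by
  cases x; cases y; exact id

noncomputable def toRightMovesAdd {x y : PGame.{u}} :
    x.RightMoves ⊕ y.RightMoves → (x + y).RightMoves := by
  cases x; cases y; exact id

@[simp] theorem add_moveLeft_inl {x : PGame.{u}} (y : PGame.{u}) (i) :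
    (x + y).moveLeft (toLeftMovesAdd (Sum.inl i)) = x.moveLeft i + y := by
  cases x; cases y; rfl

@[simp] theorem add_moveLeft_inr (x : PGame.{u}) {y : PGame.{u}} (i) :
    (x + y).moveLeft (toLeftMovesAdd (Sum.inr i)) = x + y.moveLeft i := by
  cases x; cases y; rfl

@[simp] theorem add_moveRight_inl {x : PGame.{u}} (y : PGame.{u}) (i) :
    (x + y).moveRight (toRightMovesAdd (Sum.inl i)) = x.moveRight i + y := by
  cases x; cases y; rfl

@[simp] theorem add_moveRight_inr (x : PGame.{u}) {y : PGame.{u}} (i) :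
    (x + y).moveRight (toRightMovesAdd (Sum.inr i)) = x + y.moveRight i := by
  cases x; cases y; rfl

theorem leftMoves_add_cases {x y : PGame.{u}} (k) {P : (x + y).LeftMoves → Prop}
    (hl : ∀ i, P <| toLeftMovesAdd (Sum.inl i)) (hr : ∀ i, P <| toLeftMovesAdd (Sum.inr i)) :
    P k := by
  cases x; cases y
  rcases k with i | i
  · exact hl i
  · exact hr i

theorem rightMoves_add_cases {x y : PGame.{u}} (k) {Q : (x + y).RightMoves → Prop}
    (hl : ∀ j, Q <| toRightMovesAdd (Sum.inl j)) (hr : ∀ j, Q <| toRightMovesAdd (Sum.inr j)) :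
    Q k := by
  cases x; cases y
  rcases k with i | i
  · exact hl i
  · exact hr i

theorem nat_succ (n : ℕ) : ((n + 1 : ℕ) : PGame.{u}) = (n : PGame.{u}) + 1 := rfl

instance isEmpty_natCast_rightMoves : ∀ n : ℕ, IsEmpty (RightMoves (n : PGame.{u}))
  | 0 => inferInstanceAs (IsEmpty PEmpty)
  | n + 1 => by
    haveI := isEmpty_natCast_rightMoves n
    refine ⟨fun j => ?_⟩
    exact rightMoves_add_cases (x := (n : PGame.{u})) (y := 1) (Q := fun _ => False) j
      (fun i => isEmptyElim i) (fun i => isEmptyElim i)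

theorem le_of_moves {x y : PGame.{u}} (hl : ∀ i, ∃ i', x.moveLeft i ≤ y.moveLeft i')
    (hr : ∀ j, ∃ j', x.moveRight j' ≤ y.moveRight j) : x ≤ y := by
  refine le_of_forall_lf (fun i => ?_) (fun j => ?_)
  · obtain ⟨i', h⟩ := hl i
    exact lf_of_le_moveLeft h
  · obtain ⟨j', h⟩ := hr j
    exact lf_of_moveRight_le h

theorem equiv_of_moves {x y : PGame.{u}}
    (hl1 : ∀ i, ∃ i', x.moveLeft i ≈ y.moveLeft i')
    (hl2 : ∀ i', ∃ i, x.moveLeft i ≈ y.moveLeft i')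
    (hr1 : ∀ j, ∃ j', x.moveRight j ≈ y.moveRight j')
    (hr2 : ∀ j', ∃ j, x.moveRight j ≈ y.moveRight j') : x ≈ y := by
  refine equiv_def.2 ⟨le_of_moves (fun i => ?_) (fun j => ?_), le_of_moves (fun i => ?_) (fun j => ?_)⟩
  · obtain ⟨i', h⟩ := hl1 i
    exact ⟨i', (equiv_def.1 h).1⟩
  · obtain ⟨j', h⟩ := hr2 j
    exact ⟨j', (equiv_def.1 h).1⟩
  · obtain ⟨i', h⟩ := hl2 i
    exact ⟨i', (equiv_def.1 h).2⟩
  · obtain ⟨j', h⟩ := hr1 j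
    exact ⟨j', (equiv_def.1 h).2⟩

theorem add_comm_equiv : ∀ x y : PGame.{u}, x + y ≈ y + x := by
  intro x
  induction x with
  | mk xl xr xL xR IHxl IHxr => ?_
  intro y
  induction y with
  | mk yl yr yL yR IHyl IHyr => ?_
  apply equiv_of_moves
  · rintro (i | j)
    · exact ⟨Sum.inr i, IHxl i _⟩
    · exact ⟨Sum.inl j, IHyl j⟩
  · rintro (j | i)
    · exact ⟨Sum.inr j, IHyl j⟩
    · exact ⟨Sum.inl i, IHxl i _⟩
  · rintro (i | j)
    · exact ⟨Sum.inr i, IHxr i _⟩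
    · exact ⟨Sum.inl j, IHyr j⟩
  · rintro (j | i)
    · exact ⟨Sum.inr j, IHyr j⟩
    · exact ⟨Sum.inl i, IHxr i _⟩

theorem add_assoc_equiv : ∀ x y z : PGame.{u}, x + y + z ≈ x + (y + z) := by
  intro x
  induction x with
  | mk xl xr xL xR IHxl IHxr => ?_
  intro y
  induction y with
  | mk yl yr yL yR IHyl IHyr => ?_
  intro z
  induction z with
  | mk zl zr zL zR IHzl IHzr => ?_
  apply equiv_of_moves
  · rintro ((i | j) | k)
    · exact ⟨Sum.inl i, IHxl i _ _⟩
    · exact ⟨Sum.inr (Sum.inl j), IHyl j _⟩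
    · exact ⟨Sum.inr (Sum.inr k), IHzl k⟩
  · rintro (i | (j | k))
    · exact ⟨Sum.inl (Sum.inl i), IHxl i _ _⟩
    · exact ⟨Sum.inl (Sum.inr j), IHyl j _⟩
    · exact ⟨Sum.inr k, IHzl k⟩
  · rintro ((i | j) | k)
    · exact ⟨Sum.inl i, IHxr i _ _⟩
    · exact ⟨Sum.inr (Sum.inl j), IHyr j _⟩
    · exact ⟨Sum.inr (Sum.inr k), IHzr k⟩
  · rintro (i | (j | k))
    · exact ⟨Sum.inl (Sum.inl i), IHxr i _ _⟩
    · exact ⟨Sum.inl (Sum.inr j), IHyr j _⟩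
    · exact ⟨Sum.inr k, IHzr k⟩

theorem add_zero_equiv : ∀ x : PGame.{u}, x + 0 ≈ x := by
  intro x
  induction x with
  | mk xl xr xL xR IHxl IHxr => ?_
  apply equiv_of_moves
  · rintro (i | k)
    · exact ⟨i, IHxl i⟩
    · exact PEmpty.elim k
  · intro i
    exact ⟨Sum.inl i, IHxl i⟩
  · rintro (j | k)
    · exact ⟨j, IHxr j⟩
    · exact PEmpty.elim k
  · intro j
    exact ⟨Sum.inl j, IHxr j⟩

theorem neg_add_cancel_aux : ∀ x : PGame.{u}, -x + x ≤ 0 ∧ 0 ≤ -x + x := by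
  intro x
  induction x with
  | mk xl xr xL xR IHxl IHxr => ?_
  constructor
  · refine le_of_forall_lf (fun k => ?_) (fun k => isEmptyElim k)
    rcases k with j | i
    · show -(xR j) + mk xl xr xL xR ⧏ 0
      refine lf_of_moveRight_le (j := toRightMovesAdd (Sum.inr (j : (mk xl xr xL xR).RightMoves))) ?_
      exact (congrArg (fun a => a ≤ (0 : PGame.{u})) (add_moveRight_inr _ _)).mpr (IHxr j).1
    · show -(mk xl xr xL xR) + xL i ⧏ 0
      refine lf_of_moveRight_le (j := toRightMovesAdd (Sum.inl (i : (-(mk xl xr xL xR)).RightMoves))) ?_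
      exact (congrArg (fun a => a ≤ (0 : PGame.{u})) (add_moveRight_inl _ _)).mpr (IHxl i).1
  · refine le_of_forall_lf (fun k => isEmptyElim k) (fun k => ?_)
    rcases k with i | j
    · show 0 ⧏ -(xL i) + mk xl xr xL xR
      refine lf_of_le_moveLeft (i := toLeftMovesAdd (Sum.inr (i : (mk xl xr xL xR).LeftMoves))) ?_
      exact (congrArg (fun a => (0 : PGame.{u}) ≤ a) (add_moveLeft_inr _ _)).mpr (IHxl i).2
    · show 0 ⧏ -(mk xl xr xL xR) + xR j
      refine lf_of_le_moveLeft (i := toLeftMovesAdd (Sum.inl (j : (-(mk xl xr xL xR)).LeftMoves))) ?_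
      exact (congrArg (fun a => (0 : PGame.{u}) ≤ a) (add_moveLeft_inl _ _)).mpr (IHxr j).2

theorem add_le_lf_aux : ∀ x y z : PGame.{u},
    (x ≤ y → x + z ≤ y + z) ∧ (x ⧏ y → x + z ⧏ y + z) := by
  intro x
  induction x with
  | mk xl xr xL xR IHxl IHxr => ?_
  intro y
  induction y with
  | mk yl yr yL yR IHyl IHyr => ?_
  intro z
  induction z with
  | mk zl zr zL zR IHzl IHzr => ?_
  constructor
  · intro h
    have h' := le_iff_forall_lf.1 h
    refine le_of_forall_lf (fun k => ?_) (fun k => ?_)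
    · rcases k with i | k
      · exact (IHxl i _ _).2 (h'.1 i)
      · exact @lf_of_le_moveLeft _ (mk yl yr yL yR + mk zl zr zL zR) (Sum.inr k) ((IHzl k).1 h)
    · rcases k with j | k
      · exact (IHyr j _).2 (h'.2 j)
      · exact @lf_of_moveRight_le (mk xl xr xL xR + mk zl zr zL zR) _ (Sum.inr k) ((IHzr k).1 h)
  · intro h
    rcases lf_iff_exists_le.1 h with ⟨i, hi⟩ | ⟨j, hj⟩
    · exact @lf_of_le_moveLeft _ (mk yl yr yL yR + mk zl zr zL zR) (Sum.inl i) ((IHyl i _).1 hi)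
    · exact @lf_of_moveRight_le (mk xl xr xL xR + mk zl zr zL zR) _ (Sum.inl j) ((IHxr j _ _).1 hj)

theorem add_le_add_right_pg {x y : PGame.{u}} (z : PGame.{u}) (h : x ≤ y) : x + z ≤ y + z :=
  (add_le_lf_aux x y z).1 h

theorem add_le_add_left_pg {x y : PGame.{u}} (z : PGame.{u}) (h : x ≤ y) : z + x ≤ z + y :=
  pg_le_trans (equiv_def.1 (add_comm_equiv z x)).1
    (pg_le_trans (add_le_add_right_pg z h) (equiv_def.1 (add_comm_equiv y z)).1)

theorem add_congr_pg {x x' y y' : PGame.{u}} (hx : x ≈ x') (hy : y ≈ y') : x + y ≈ x' + y' :=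
  equiv_def.2
    ⟨pg_le_trans (add_le_add_right_pg y (equiv_def.1 hx).1) (add_le_add_left_pg x' (equiv_def.1 hy).1),
      pg_le_trans (add_le_add_right_pg y' (equiv_def.1 hx).2) (add_le_add_left_pg x (equiv_def.1 hy).2)⟩

instance setoid : Setoid PGame.{u} :=
  ⟨fun x y => x ≈ y, ⟨equiv_refl', equiv_symm', equiv_trans'⟩⟩

end PGame

/-- Games: pregames up to equivalence. -/
abbrev Game := Quotient PGame.setoid.{u}

namespace Game

def leRel : Game.{u} → Game.{u} → Prop :=
  Quotient.lift₂ (fun x y : PGame.{u} => x ≤ y) fun a₁ b₁ a₂ b₂ ha hb =>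
    propext ⟨fun h => PGame.pg_le_trans (PGame.equiv_def.1 ha).2
        (PGame.pg_le_trans h (PGame.equiv_def.1 hb).1),
      fun h => PGame.pg_le_trans (PGame.equiv_def.1 ha).1
        (PGame.pg_le_trans h (PGame.equiv_def.1 hb).2)⟩

noncomputable instance instLE : LE Game.{u} := ⟨leRel⟩

noncomputable instance instLT : LT Game.{u} := ⟨fun a b => a ≤ b ∧ ¬ b ≤ a⟩

noncomputable instance instPreorder : Preorder Game.{u} where
  le_refl := by
    rintro ⟨x⟩
    exact PGame.pg_le_refl x
  le_trans := by
    rintro ⟨x⟩ ⟨y⟩ ⟨z⟩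
    exact PGame.pg_le_trans
  lt_iff_le_not_ge := fun _ _ => Iff.rfl

noncomputable instance instPartialOrder : PartialOrder Game.{u} where
  le_antisymm := by
    rintro ⟨x⟩ ⟨y⟩ h₁ h₂
    exact Quot.sound (PGame.equiv_def.2 ⟨h₁, h₂⟩)

instance instZero : Zero Game.{u} := ⟨⟦0⟧⟩

instance instOne : One Game.{u} := ⟨⟦1⟧⟩

instance instNeg : Neg Game.{u} :=
  ⟨Quotient.map (fun x : PGame.{u} => -x) fun _ _ h => PGame.neg_congr' h⟩

noncomputable instance instAdd : Add Game.{u} :=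
  ⟨Quotient.map₂ (fun x y : PGame.{u} => x + y) fun _ _ h₁ _ _ h₂ => PGame.add_congr_pg h₁ h₂⟩

noncomputable instance instAddCommGroupWithOne : AddCommGroupWithOne Game.{u} where
  zero := 0
  one := 1
  neg := Neg.neg
  add := (· + ·)
  add_assoc := by
    rintro ⟨x⟩ ⟨y⟩ ⟨z⟩
    exact Quot.sound (PGame.add_assoc_equiv x y z)
  zero_add := by
    rintro ⟨x⟩
    exact Quot.sound (PGame.equiv_trans' (PGame.add_comm_equiv 0 x) (PGame.add_zero_equiv x))
  add_zero := by
    rintro ⟨x⟩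
    exact Quot.sound (PGame.add_zero_equiv x)
  neg_add_cancel := by
    rintro ⟨x⟩
    exact Quot.sound (PGame.equiv_def.2 (PGame.neg_add_cancel_aux x))
  add_comm := by
    rintro ⟨x⟩ ⟨y⟩
    exact Quot.sound (PGame.add_comm_equiv x y)
  nsmul := nsmulRec
  zsmul := zsmulRec

instance instIsOrderedAddMonoid : IsOrderedAddMonoid Game.{u} where
  add_le_add_left := by
    rintro ⟨a⟩ ⟨b⟩ h ⟨c⟩
    exact PGame.add_le_add_right_pg (x := a) (y := b) c h

end Game

namespace PGame

theorem le_iff_game_le {x y : PGame.{u}} : x ≤ y ↔ (⟦x⟧ : Game) ≤ ⟦y⟧ := Iff.rfl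

theorem lt_iff_game_lt {x y : PGame.{u}} : x < y ↔ (⟦x⟧ : Game) < ⟦y⟧ :=
  show (x ≤ y ∧ ¬ y ≤ x) ↔ ((⟦x⟧ : Game) ≤ ⟦y⟧ ∧ ¬ (⟦y⟧ : Game) ≤ ⟦x⟧) from Iff.rfl

theorem equiv_iff_game_eq {x y : PGame.{u}} : x ≈ y ↔ (⟦x⟧ : Game) = ⟦y⟧ :=
  ⟨fun h => Quot.sound h, fun h => Quotient.exact h⟩

theorem quot_zero : (⟦0⟧ : Game.{u}) = 0 := rfl

theorem quot_one : (⟦1⟧ : Game.{u}) = 1 := rfl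

theorem quot_neg (x : PGame.{u}) : (⟦-x⟧ : Game) = -⟦x⟧ := rfl

theorem quot_add (x y : PGame.{u}) : (⟦x + y⟧ : Game) = ⟦x⟧ + ⟦y⟧ := rfl

theorem quot_sub (x y : PGame.{u}) : (⟦x - y⟧ : Game) = ⟦x⟧ - ⟦y⟧ := by
  rw [sub_eq_add_neg]
  rfl

theorem quot_natCast : ∀ n : ℕ, (⟦(n : PGame.{u})⟧ : Game) = (n : Game)
  | 0 => by
    rw [Nat.cast_zero]
    rfl
  | n + 1 => by
    rw [Nat.cast_succ, ← quot_natCast n]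
    rfl

end PGame

end SetTheory

namespace SnortFormal

open PGame

@[simp] lemma ofPair_moveLeft (A B : PGame) (i) : (ofPair A B).moveLeft i = A := rfl

@[simp] lemma ofPair_moveRight (A B : PGame) (i) : (ofPair A B).moveRight i = B := rfl

lemma gnat_nonneg : ∀ m : ℕ, (0:Game) ≤ (m:Game)
  | 0 => by simp
  | (m+1) => by
      have h1 : (0:Game) ≤ 1 := PGame.le_iff_game_le.1 PGame.zero_lt_one.le
      have h2 := gnat_nonneg m
      push_cast
      calc (0:Game) = 0 + 0 := by rw [add_zero]
        _ ≤ (m:Game) + 1 := add_le_add h2 h1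

lemma gnat_le {a b : ℕ} (h : a ≤ b) : (a:Game) ≤ (b:Game) := by
  have hb : b = a + (b - a) := by omega
  rw [hb]
  push_cast
  exact le_add_of_nonneg_right (gnat_nonneg _)

lemma gnat_lt {a b : ℕ} (h : a < b) : (a:Game) < (b:Game) := by
  have hb : b = a + ((b - a - 1) + 1) := by omega
  rw [hb]
  push_cast
  have hpos : (0:Game) < ((b - a - 1 : ℕ):Game) + 1 := by
    have h1 : (0:Game) < 1 := PGame.lt_iff_game_lt.1 PGame.zero_lt_one
    calc (0:Game) < 1 := h1
      _ = 0 + 1 := by rw [zero_add]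
      _ ≤ ((b - a - 1 : ℕ):Game) + 1 := add_le_add_left (gnat_nonneg _) 1
  exact lt_add_of_pos_right _ hpos

lemma pnat_le {a b : ℕ} (h : a ≤ b) : (a:PGame) ≤ (b:PGame) := by
  rw [PGame.le_iff_game_le, quot_natCast, quot_natCast]
  exact gnat_le h

lemma pnat_lf {a b : ℕ} (h : a < b) : (a:PGame) ⧏ (b:PGame) := by
  apply PGame.lf_of_lt
  rw [PGame.lt_iff_game_lt, quot_natCast, quot_natCast]
  exact gnat_lt h

lemma nat_moveLeft : ∀ (m : ℕ) (i : LeftMoves (m:PGame)),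
    ∃ k : ℕ, k < m ∧ (⟦(m:PGame).moveLeft i⟧ : Game) = (k:Game)
  | 0, i => isEmptyElim (show (0:PGame).LeftMoves from i)
  | (m+1), i => by
      revert i
      rw [PGame.nat_succ]
      intro i
      apply leftMoves_add_cases i
      · intro j
        obtain ⟨k, hk, hk2⟩ := nat_moveLeft m j
        refine ⟨k+1, by omega, ?_⟩
        rw [add_moveLeft_inl, quot_add, hk2, quot_one]
        push_cast
        rfl
      · intro j
        refine ⟨m, by omega, ?_⟩
        rw [add_moveLeft_inr]
        have h1 : (1:PGame).moveLeft j = 0 := by cases j; rfl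
        rw [h1, quot_add, quot_zero, add_zero, quot_natCast]

lemma key (n : ℕ) (hn : 1 ≤ n) (A : PGame) (hA : A = 0 ∨ A = PGame.star) :
    (ofPair (-(n:PGame)) (-((n+(n+1):ℕ):PGame) + A) + ofPair ((n+1:ℕ):PGame) A)
      + (n:PGame) ≈ A := by
  have hGle : ofPair ((n+1:ℕ):PGame) A ≤ ((n+2:ℕ):PGame) := by
    refine le_of_forall_lf (fun i => ?_) (fun j => isEmptyElim j)
    rw [ofPair_moveLeft]
    exact pnat_lf (by omega)
  have hgle : (⟦ofPair ((n+1:ℕ):PGame) A⟧:Game) ≤ ((n+2:ℕ):Game) := by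
    have := PGame.le_iff_game_le.1 hGle
    rwa [quot_natCast] at this
  have hstarle : PGame.star ≤ ((n+1:ℕ):PGame) := by
    refine le_of_forall_lf (fun i => ?_) (fun j => isEmptyElim j)
    rw [star_moveLeft]
    exact pnat_lf (a := 0) (by omega)
  have hGA : A = PGame.star →
      (⟦ofPair ((n+1:ℕ):PGame) A⟧:Game) + ⟦A⟧ ≤ ((n+1:ℕ):Game) := by
    rintro rfl
    have hle : ofPair ((n+1:ℕ):PGame) PGame.star + PGame.star ≤ ((n+1:ℕ):PGame) := by
      refine le_of_forall_lf (fun i => ?_) (fun j => isEmptyElim j)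
      apply leftMoves_add_cases i
      · intro u
        rw [add_moveLeft_inl, ofPair_moveLeft]
        rw [← PGame.not_le]
        intro hcon
        have h0A : (0:Game) ≤ ⟦PGame.star⟧ := by
          have := PGame.le_iff_game_le.1 hcon
          rw [quot_add] at this
          exact (le_add_iff_nonneg_right _).1 this
        have h0A' : (0:PGame) ≤ PGame.star := PGame.le_iff_game_le.2 h0A
        exact (PGame.not_le.2 star_lf_zero) h0A'
      · intro u
        rw [add_moveLeft_inr, star_moveLeft]
        rw [← PGame.not_le]
        intro hcon
        have h2 : ((n+1:ℕ):PGame) ≤ ofPair ((n+1:ℕ):PGame) PGame.star := by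
          rw [PGame.le_iff_game_le] at hcon ⊢
          rw [quot_add, quot_zero, add_zero] at hcon
          exact hcon
        have h3 := h2.lf_moveRight PUnit.unit
        change ((n+1:ℕ):PGame) ⧏ PGame.star at h3
        exact (PGame.not_le.2 h3) hstarle
    have := PGame.le_iff_game_le.1 hle
    rwa [quot_add, quot_natCast] at this
  constructor
  · refine le_of_forall_lf (fun i => ?_) (fun j => ?_)
    · apply leftMoves_add_cases i
      · intro j
        apply leftMoves_add_cases j
        · intro u
          rw [add_moveLeft_inl, add_moveLeft_inl, ofPair_moveLeft]
          refine lf_of_moveRight_le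
            (j := toRightMovesAdd (Sum.inl (toRightMovesAdd (Sum.inr PUnit.unit)))) ?_
          erw [add_moveRight_inl, add_moveRight_inr, ofPair_moveRight]
          rw [PGame.le_iff_game_le]
          simp only [quot_add, quot_neg, quot_natCast]
          exact le_of_eq (by abel)
        · intro u
          rw [add_moveLeft_inl, add_moveLeft_inr, ofPair_moveLeft]
          refine lf_of_moveRight_le
            (j := toRightMovesAdd (Sum.inl (toRightMovesAdd (Sum.inl PUnit.unit)))) ?_
          erw [add_moveRight_inl, add_moveRight_inl, ofPair_moveRight]
          rw [PGame.le_iff_game_le]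
          simp only [quot_add, quot_neg, quot_natCast]
          push_cast
          exact le_of_eq (by abel)
      · intro u
        obtain ⟨k, hk, hkeq⟩ := nat_moveLeft n u
        rw [add_moveLeft_inr]
        refine lf_of_moveRight_le
          (j := toRightMovesAdd (Sum.inl (toRightMovesAdd (Sum.inl PUnit.unit)))) ?_
        erw [add_moveRight_inl, add_moveRight_inl, ofPair_moveRight]
        rw [PGame.le_iff_game_le]
        simp only [quot_add, quot_neg, quot_natCast, hkeq]
        have hgk : (⟦ofPair ((n+1:ℕ):PGame) A⟧:Game) + (k:Game) ≤ ((n+(n+1):ℕ):Game) := by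
          calc (⟦ofPair ((n+1:ℕ):PGame) A⟧:Game) + (k:Game)
              ≤ ((n+2:ℕ):Game) + (k:Game) := add_le_add_left hgle _
            _ = ((n+2+k:ℕ):Game) := by push_cast; abel
            _ ≤ ((n+(n+1):ℕ):Game) := gnat_le (by omega)
        calc (-(((n+(n+1):ℕ)):Game) + ⟦A⟧ + ⟦ofPair ((n+1:ℕ):PGame) A⟧) + (k:Game)
            = ⟦A⟧ + ((⟦ofPair ((n+1:ℕ):PGame) A⟧ + (k:Game)) - ((n+(n+1):ℕ):Game)) := by
              abel
          _ ≤ ⟦A⟧ + 0 := add_le_add_right (sub_nonpos.2 hgk) _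
          _ = ⟦A⟧ := add_zero _
    · rcases hA with rfl | rfl
      · exact isEmptyElim j
      · rw [star_moveRight]
        refine lf_of_moveRight_le
          (j := toRightMovesAdd (Sum.inl (toRightMovesAdd (Sum.inl PUnit.unit)))) ?_
        erw [add_moveRight_inl, add_moveRight_inl, ofPair_moveRight]
        rw [PGame.le_iff_game_le]
        simp only [quot_add, quot_neg, quot_zero, quot_natCast]
        have h1 := hGA rfl
        have hKeq : (((n+(n+1):ℕ)):Game) = ((n:ℕ):Game) + ((n+1:ℕ):Game) := by
          push_cast
          abel
        calc (-(((n+(n+1):ℕ)):Game) + ⟦PGame.star⟧ + ⟦ofPair ((n+1:ℕ):PGame) PGame.star⟧)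
              + ((n:ℕ):Game)
            = (⟦ofPair ((n+1:ℕ):PGame) PGame.star⟧ + ⟦PGame.star⟧)
              + (((n:ℕ):Game) - ((n+(n+1):ℕ):Game)) := by abel
          _ = (⟦ofPair ((n+1:ℕ):PGame) PGame.star⟧ + ⟦PGame.star⟧) - ((n+1:ℕ):Game) := by
              rw [hKeq]; abel
          _ ≤ ((n+1:ℕ):Game) - ((n+1:ℕ):Game) := sub_le_sub_right h1 _
          _ = 0 := sub_self _
  · refine le_of_forall_lf (fun i => ?_) (fun j => ?_)
    · rcases hA with rfl | rfl
      · exact isEmptyElim i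
      · rw [star_moveLeft]
        refine lf_of_le_moveLeft
          (i := toLeftMovesAdd (Sum.inl (toLeftMovesAdd (Sum.inl PUnit.unit)))) ?_
        erw [add_moveLeft_inl, add_moveLeft_inl, ofPair_moveLeft]
        have hG0 : (0:PGame) ≤ ofPair ((n+1:ℕ):PGame) PGame.star := by
          refine le_of_forall_lf (fun i2 => isEmptyElim i2) (fun j2 => ?_)
          rw [ofPair_moveRight]
          exact zero_lf_star
        rw [PGame.le_iff_game_le]
        simp only [quot_add, quot_neg, quot_zero, quot_natCast]
        have h0g := PGame.le_iff_game_le.1 hG0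
        rw [quot_zero] at h0g
        calc (0:Game) ≤ ⟦ofPair ((n+1:ℕ):PGame) PGame.star⟧ := h0g
          _ = (-((n:ℕ):Game) + ⟦ofPair ((n+1:ℕ):PGame) PGame.star⟧) + ((n:ℕ):Game) := by
              abel
    · apply rightMoves_add_cases j
      · intro j'
        apply rightMoves_add_cases j'
        · intro u
          rw [add_moveRight_inl, add_moveRight_inl, ofPair_moveRight]
          refine lf_of_le_moveLeft
            (i := toLeftMovesAdd (Sum.inl (toLeftMovesAdd (Sum.inr PUnit.unit)))) ?_
          erw [add_moveLeft_inl, add_moveLeft_inr, ofPair_moveLeft]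
          rw [PGame.le_iff_game_le]
          simp only [quot_add, quot_neg, quot_natCast]
          push_cast
          exact le_of_eq (by abel)
        · intro u
          rw [add_moveRight_inl, add_moveRight_inr, ofPair_moveRight]
          refine lf_of_le_moveLeft
            (i := toLeftMovesAdd (Sum.inl (toLeftMovesAdd (Sum.inl PUnit.unit)))) ?_
          erw [add_moveLeft_inl, add_moveLeft_inl, ofPair_moveLeft]
          rw [PGame.le_iff_game_le]
          simp only [quot_add, quot_neg, quot_natCast]
          exact le_of_eq (by abel)
      · intro u
        exact isEmptyElim u

/-- `s(n) - n - {n+1 | s(n)} ≈ {-n | -(2n+1) + s(n)}`. -/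
theorem star_sub_number_sub_tinted_star (n : ℕ) (hn : 1 ≤ n) :
    sgame n - (n : PGame) - ofPair ((n+1 : ℕ) : PGame) (sgame n)
      ≈ ofPair (-(n : PGame)) (-((2*n+1 : ℕ) : PGame) + sgame n) := by
  have hA : sgame n = 0 ∨ sgame n = PGame.star := by
    by_cases h : Even n <;> simp [sgame, h]
  have h2n : ((2*n+1 : ℕ) : PGame) = ((n+(n+1) : ℕ) : PGame) := by
    rw [show 2*n+1 = n+(n+1) from by ring]
  rw [h2n]
  have k := key n hn (sgame n) hA
  rw [PGame.equiv_iff_game_eq] at k ⊢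
  simp only [PGame.quot_sub, PGame.quot_add, PGame.quot_natCast] at k ⊢
  rw [← k]
  abel
end SnortFormal
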